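/- arXiv:2403.03057 — 3 statements merged into one kernel-verified Lean document; each statement's English description precedes it below -/
import Mathlib

section
/- For every set of lifelines L ⊆ ℒ and every global trace t ∈ 𝔸(L)*, the projections of the prefixes of t are multi-prefixes of the projection of t: π_L(t̄) ⊆ \overline{π_L(t)}. Moreover this inclusion is strict in general: there exist L ⊆ ℒ and t ∈ 𝔸(L)* such that \overline{π_L(t)} is not contained in π_L(t̄) (for instance L = {l1,l2} and t = l1!m . l2?m). -/
open scoped Classical

namespace RV

/-- A communication action: a lifeline, a kind (`true` = emission `!`,
`false` = reception `?`) and a message. -/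
structure Action (Λ M : Type) where
  lifeline : Λ
  kind : Bool
  msg : M

/-- The interaction language: empty interaction, actions, the three loop
operators and the four binary operators. -/
inductive Interaction (Λ M : Type) : Type where
  | empty : Interaction Λ M
  | act : Action Λ M → Interaction Λ M
  | loopS : Interaction Λ M → Interaction Λ M
  | loopW : Interaction Λ M → Interaction Λ M
  | loopP : Interaction Λ M → Interaction Λ M
  | strict : Interaction Λ M → Interaction Λ M → Interaction Λ M
  | seq : Interaction Λ M → Interaction Λ M → Interaction Λ M
  | par : Interaction Λ M → Interaction Λ M → Interaction Λ M
  | alt : Interaction Λ M → Interaction Λ M → Interaction Λ M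

variable {Λ M : Type}

/-- `i ∈ 𝕀(L)` : all actions of `i` occur on lifelines belonging to `L`. -/
def Interaction.lifelinesIn (L : Set Λ) : Interaction Λ M → Prop
  | .empty => True
  | .act a => a.lifeline ∈ L
  | .loopS i => i.lifelinesIn L
  | .loopW i => i.lifelinesIn L
  | .loopP i => i.lifelinesIn L
  | .strict i1 i2 => i1.lifelinesIn L ∧ i2.lifelinesIn L
  | .seq i1 i2 => i1.lifelinesIn L ∧ i2.lifelinesIn L
  | .par i1 i2 => i1.lifelinesIn L ∧ i2.lifelinesIn L
  | .alt i1 i2 => i1.lifelinesIn L ∧ i2.lifelinesIn L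

/-- Lifeline removal `rmv_H` on interactions : actions occurring on a
lifeline of `H` are replaced by the empty interaction, the term structure
is preserved (no simplification). -/
noncomputable def rmv (H : Set Λ) : Interaction Λ M → Interaction Λ M
  | .empty => .empty
  | .act a => if a.lifeline ∈ H then .empty else .act a
  | .loopS i => .loopS (rmv H i)
  | .loopW i => .loopW (rmv H i)
  | .loopP i => .loopP (rmv H i)
  | .strict i1 i2 => .strict (rmv H i1) (rmv H i2)
  | .seq i1 i2 => .seq (rmv H i1) (rmv H i2)
  | .par i1 i2 => .par (rmv H i1) (rmv H i2)
  | .alt i1 i2 => .alt (rmv H i1) (rmv H i2)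

/-- The subterm of an interaction at a position (Dewey notation,
`false` = child 1, `true` = child 2); `none` when the position is invalid.
The positions of `i` are exactly those `p` with `(subtermAt i p).isSome`,
and the symbol `i(p)` is the head symbol of `subtermAt i p`. -/
def subtermAt : Interaction Λ M → List Bool → Option (Interaction Λ M)
  | i, [] => some i
  | .loopS i, false :: p => subtermAt i p
  | .loopW i, false :: p => subtermAt i p
  | .loopP i, false :: p => subtermAt i p
  | .strict i1 _, false :: p => subtermAt i1 p
  | .strict _ i2, true :: p => subtermAt i2 p
  | .seq i1 _, false :: p => subtermAt i1 p
  | .seq _ i2, true :: p => subtermAt i2 p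
  | .par i1 _, false :: p => subtermAt i1 p
  | .par _ i2, true :: p => subtermAt i2 p
  | .alt i1 _, false :: p => subtermAt i1 p
  | .alt _ i2, true :: p => subtermAt i2 p
  | _, _ => none

/-- A multi-trace : one local trace per lifeline (components on lifelines
outside the relevant set `L` are required to be empty, see
`MultiTrace.over`). -/
abbrev MultiTrace (Λ M : Type) := Λ → List (Action Λ M)

namespace MultiTrace

/-- `a ∧ μ` : prepend action `a` to the component of `μ` on `θ(a)`. -/
noncomputable def prepend (a : Action Λ M) (μ : MultiTrace Λ M) : MultiTrace Λ M :=
  fun l => if l = a.lifeline then a :: μ l else μ l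

/-- `μ ∧ a` : append action `a` to the component of `μ` on `θ(a)`. -/
noncomputable def append (μ : MultiTrace Λ M) (a : Action Λ M) : MultiTrace Λ M :=
  fun l => if l = a.lifeline then μ l ++ [a] else μ l

/-- The empty multi-trace `ε_L`. -/
def eps : MultiTrace Λ M := fun _ => []

/-- `μ ∈ 𝕄(L)` : components vanish outside `L` and every action of the
component on `l` occurs on `l`. -/
def over' (L : Set Λ) (μ : MultiTrace Λ M) : Prop :=
  (∀ l ∉ L, μ l = []) ∧ ∀ l, ∀ a ∈ μ l, a.lifeline = l

/-- Lifeline removal `rmv_H` on multi-traces : restriction of the tuple of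
components to `L ∖ H` (removed components become empty). -/
noncomputable def rmv (H : Set Λ) (μ : MultiTrace Λ M) : MultiTrace Λ M :=
  fun l => if l ∈ H then [] else μ l

/-- Strict sequencing `μ1 ; μ2` of multi-traces : componentwise
concatenation. -/
def concat (μ1 μ2 : MultiTrace Λ M) : MultiTrace Λ M := fun l => μ1 l ++ μ2 l

/-- Multi-prefix relation : componentwise word prefix. -/
def isPrefixOf (μ' μ : MultiTrace Λ M) : Prop := ∀ l, μ' l <+: μ l

end MultiTrace

/-- Interleaving `μ ∈ μ1 || μ2` of multi-traces. -/
inductive MTShuffle : MultiTrace Λ M → MultiTrace Λ M → MultiTrace Λ M → Prop where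
  | nilL (μ : MultiTrace Λ M) : MTShuffle MultiTrace.eps μ μ
  | nilR (μ : MultiTrace Λ M) : MTShuffle μ MultiTrace.eps μ
  | left {μ1 μ2 μ : MultiTrace Λ M} (a : Action Λ M) :
      MTShuffle μ1 μ2 μ → MTShuffle (MultiTrace.prepend a μ1) μ2 (MultiTrace.prepend a μ)
  | right {μ1 μ2 μ : MultiTrace Λ M} (a : Action Λ M) :
      MTShuffle μ1 μ2 μ → MTShuffle μ1 (MultiTrace.prepend a μ2) (MultiTrace.prepend a μ)

/-- Interleaving (shuffle) `t ∈ t1 || t2` of global traces (words). -/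
inductive ListShuffle {α : Type} : List α → List α → List α → Prop where
  | nil : ListShuffle [] [] []
  | left {t1 t2 t : List α} (a : α) : ListShuffle t1 t2 t → ListShuffle (a :: t1) t2 (a :: t)
  | right {t1 t2 t : List α} (a : α) : ListShuffle t1 t2 t → ListShuffle t1 (a :: t2) (a :: t)

/-- Conflict predicate `t ⫫ l` : the trace `t` contains an action on `l`. -/
def conflicts (t : List (Action Λ M)) (l : Λ) : Prop := ∃ a ∈ t, a.lifeline = l

/-- Weak sequencing `t ∈ t1 ;⫫ t2` of global traces : actions of `t2` may
be anticipated only when the remaining part of `t1` has no conflict on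
their lifeline. -/
inductive WeakSeq : List (Action Λ M) → List (Action Λ M) → List (Action Λ M) → Prop where
  | nilL (t : List (Action Λ M)) : WeakSeq [] t t
  | nilR (t : List (Action Λ M)) : WeakSeq t [] t
  | left {t1 t2 t : List (Action Λ M)} (a1 : Action Λ M) :
      WeakSeq t1 t2 t → WeakSeq (a1 :: t1) t2 (a1 :: t)
  | right {t1 t2 t : List (Action Λ M)} (a2 : Action Λ M) :
      ¬ conflicts t1 a2.lifeline → WeakSeq t1 t2 t → WeakSeq t1 (a2 :: t2) (a2 :: t)

/-- Projection `π_L` of a global trace onto a multi-trace. -/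
noncomputable def proj : List (Action Λ M) → MultiTrace Λ M
  | [] => MultiTrace.eps
  | a :: t => MultiTrace.prepend a (proj t)

/-- Elementwise strict sequencing on sets of multi-traces. -/
def concatSet (S1 S2 : Set (MultiTrace Λ M)) : Set (MultiTrace Λ M) :=
  {μ | ∃ μ1 ∈ S1, ∃ μ2 ∈ S2, μ = MultiTrace.concat μ1 μ2}

/-- Elementwise interleaving on sets of multi-traces. -/
def shuffleSet (S1 S2 : Set (MultiTrace Λ M)) : Set (MultiTrace Λ M) :=
  {μ | ∃ μ1 ∈ S1, ∃ μ2 ∈ S2, MTShuffle μ1 μ2 μ}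

/-- `S^{;n}`. -/
def powConcat (S : Set (MultiTrace Λ M)) : ℕ → Set (MultiTrace Λ M)
  | 0 => {MultiTrace.eps}
  | n + 1 => concatSet S (powConcat S n)

/-- Kleene closure `S^{;*}`. -/
def kleeneConcat (S : Set (MultiTrace Λ M)) : Set (MultiTrace Λ M) := ⋃ n, powConcat S n

/-- `S^{||n}`. -/
def powShuffle (S : Set (MultiTrace Λ M)) : ℕ → Set (MultiTrace Λ M)
  | 0 => {MultiTrace.eps}
  | n + 1 => shuffleSet S (powShuffle S n)

/-- Kleene closure `S^{||*}`. -/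
def kleeneShuffle (S : Set (MultiTrace Λ M)) : Set (MultiTrace Λ M) := ⋃ n, powShuffle S n

/-- The multi-trace semantics `σ_L : 𝕀(L) → 𝒫(𝕄(L))`. -/
noncomputable def sem : Interaction Λ M → Set (MultiTrace Λ M)
  | .empty => {MultiTrace.eps}
  | .act a => {MultiTrace.prepend a MultiTrace.eps}
  | .alt i1 i2 => sem i1 ∪ sem i2
  | .strict i1 i2 => concatSet (sem i1) (sem i2)
  | .seq i1 i2 => concatSet (sem i1) (sem i2)
  | .par i1 i2 => shuffleSet (sem i1) (sem i2)
  | .loopS i => kleeneConcat (sem i)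
  | .loopW i => kleeneConcat (sem i)
  | .loopP i => kleeneShuffle (sem i)

/-- Multi-prefix closure `\overline{S}` of a set of multi-traces. -/
def prefixClosure (S : Set (MultiTrace Λ M)) : Set (MultiTrace Λ M) :=
  {μ' | ∃ μ ∈ S, MultiTrace.isPrefixOf μ' μ}

/-- Termination predicate `i ↓` : `i` accepts the empty (multi-)trace. -/
inductive Terminates : Interaction Λ M → Prop where
  | empty : Terminates .empty
  | altL {i1 i2 : Interaction Λ M} : Terminates i1 → Terminates (.alt i1 i2)
  | altR {i1 i2 : Interaction Λ M} : Terminates i2 → Terminates (.alt i1 i2)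
  | strict {i1 i2 : Interaction Λ M} : Terminates i1 → Terminates i2 → Terminates (.strict i1 i2)
  | seq {i1 i2 : Interaction Λ M} : Terminates i1 → Terminates i2 → Terminates (.seq i1 i2)
  | par {i1 i2 : Interaction Λ M} : Terminates i1 → Terminates i2 → Terminates (.par i1 i2)
  | loopS (i : Interaction Λ M) : Terminates (.loopS i)
  | loopW (i : Interaction Λ M) : Terminates (.loopW i)
  | loopP (i : Interaction Λ M) : Terminates (.loopP i)

/-- Collision predicate `i ⫫̸ l` : every trace of `i` contains an action
on lifeline `l`. -/
inductive Collides : Interaction Λ M → Λ → Prop where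
  | act {a : Action Λ M} {l : Λ} : a.lifeline = l → Collides (.act a) l
  | alt {i1 i2 : Interaction Λ M} {l : Λ} :
      Collides i1 l → Collides i2 l → Collides (.alt i1 i2) l
  | strictL {i1 i2 : Interaction Λ M} {l : Λ} : Collides i1 l → Collides (.strict i1 i2) l
  | strictR {i1 i2 : Interaction Λ M} {l : Λ} : Collides i2 l → Collides (.strict i1 i2) l
  | seqL {i1 i2 : Interaction Λ M} {l : Λ} : Collides i1 l → Collides (.seq i1 i2) l
  | seqR {i1 i2 : Interaction Λ M} {l : Λ} : Collides i2 l → Collides (.seq i1 i2) l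
  | parL {i1 i2 : Interaction Λ M} {l : Λ} : Collides i1 l → Collides (.par i1 i2) l
  | parR {i1 i2 : Interaction Λ M} {l : Λ} : Collides i2 l → Collides (.par i1 i2) l

/-- Pruning relation `i ≃^⫫_l i'`. -/
inductive Prunes : Interaction Λ M → Λ → Interaction Λ M → Prop where
  | empty (l : Λ) : Prunes .empty l .empty
  | act {a : Action Λ M} {l : Λ} : a.lifeline ≠ l → Prunes (.act a) l (.act a)
  | strict {i1 i2 i1' i2' : Interaction Λ M} {l : Λ} :
      Prunes i1 l i1' → Prunes i2 l i2' → Prunes (.strict i1 i2) l (.strict i1' i2')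
  | seq {i1 i2 i1' i2' : Interaction Λ M} {l : Λ} :
      Prunes i1 l i1' → Prunes i2 l i2' → Prunes (.seq i1 i2) l (.seq i1' i2')
  | par {i1 i2 i1' i2' : Interaction Λ M} {l : Λ} :
      Prunes i1 l i1' → Prunes i2 l i2' → Prunes (.par i1 i2) l (.par i1' i2')
  | altBoth {i1 i2 i1' i2' : Interaction Λ M} {l : Λ} :
      Prunes i1 l i1' → Prunes i2 l i2' → Prunes (.alt i1 i2) l (.alt i1' i2')
  | altL {i1 i2 i1' : Interaction Λ M} {l : Λ} :
      Prunes i1 l i1' → Collides i2 l → Prunes (.alt i1 i2) l i1'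
  | altR {i1 i2 i2' : Interaction Λ M} {l : Λ} :
      Prunes i2 l i2' → Collides i1 l → Prunes (.alt i1 i2) l i2'
  | loopS {i1 i1' : Interaction Λ M} {l : Λ} :
      Prunes i1 l i1' → Prunes (.loopS i1) l (.loopS i1')
  | loopW {i1 i1' : Interaction Λ M} {l : Λ} :
      Prunes i1 l i1' → Prunes (.loopW i1) l (.loopW i1')
  | loopP {i1 i1' : Interaction Λ M} {l : Λ} :
      Prunes i1 l i1' → Prunes (.loopP i1) l (.loopP i1')
  | loopSElim {i1 : Interaction Λ M} {l : Λ} : Collides i1 l → Prunes (.loopS i1) l .empty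
  | loopWElim {i1 : Interaction Λ M} {l : Λ} : Collides i1 l → Prunes (.loopW i1) l .empty
  | loopPElim {i1 : Interaction Λ M} {l : Λ} : Collides i1 l → Prunes (.loopP i1) l .empty

/-- Execution relation `i →[a@p] i'` of the structural operational
semantics (positions over `{1,2}` encoded by `false`/`true`). -/
inductive Executes : Interaction Λ M → Action Λ M → List Bool → Interaction Λ M → Prop where
  | act (a : Action Λ M) : Executes (.act a) a [] .empty
  | altL {i1 i1' : Interaction Λ M} {a : Action Λ M} {p : List Bool} (i2 : Interaction Λ M) :
      Executes i1 a p i1' → Executes (.alt i1 i2) a (false :: p) i1'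
  | altR {i2 i2' : Interaction Λ M} {a : Action Λ M} {p : List Bool} (i1 : Interaction Λ M) :
      Executes i2 a p i2' → Executes (.alt i1 i2) a (true :: p) i2'
  | parL {i1 i1' : Interaction Λ M} {a : Action Λ M} {p : List Bool} (i2 : Interaction Λ M) :
      Executes i1 a p i1' → Executes (.par i1 i2) a (false :: p) (.par i1' i2)
  | parR {i2 i2' : Interaction Λ M} {a : Action Λ M} {p : List Bool} (i1 : Interaction Λ M) :
      Executes i2 a p i2' → Executes (.par i1 i2) a (true :: p) (.par i1 i2')
  | strictL {i1 i1' : Interaction Λ M} {a : Action Λ M} {p : List Bool} (i2 : Interaction Λ M) :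
      Executes i1 a p i1' → Executes (.strict i1 i2) a (false :: p) (.strict i1' i2)
  | strictR {i1 i2 i2' : Interaction Λ M} {a : Action Λ M} {p : List Bool} :
      Terminates i1 → Executes i2 a p i2' → Executes (.strict i1 i2) a (true :: p) i2'
  | seqL {i1 i1' : Interaction Λ M} {a : Action Λ M} {p : List Bool} (i2 : Interaction Λ M) :
      Executes i1 a p i1' → Executes (.seq i1 i2) a (false :: p) (.seq i1' i2)
  | seqR {i1 i1' i2 i2' : Interaction Λ M} {a : Action Λ M} {p : List Bool} :
      Prunes i1 a.lifeline i1' → Executes i2 a p i2' →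
      Executes (.seq i1 i2) a (true :: p) (.seq i1' i2')
  | loopS {i1 i1' : Interaction Λ M} {a : Action Λ M} {p : List Bool} :
      Executes i1 a p i1' → Executes (.loopS i1) a (false :: p) (.strict i1' (.loopS i1))
  | loopW {i1 i1' i'' : Interaction Λ M} {a : Action Λ M} {p : List Bool} :
      Executes i1 a p i1' → Prunes (.loopW i1) a.lifeline i'' →
      Executes (.loopW i1) a (false :: p) (.seq i'' (.seq i1' (.loopW i1)))
  | loopP {i1 i1' : Interaction Λ M} {a : Action Λ M} {p : List Bool} :
      Executes i1 a p i1' → Executes (.loopP i1) a (false :: p) (.par i1' (.loopP i1))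

/-- Vertices of the analysis graph : `Ok` or a pair of an interaction and a
multi-trace over a current set of lifelines `L`. -/
inductive Vertex (Λ M : Type) : Type where
  | ok : Vertex Λ M
  | node : Set Λ → Interaction Λ M → MultiTrace Λ M → Vertex Λ M

/-- Rule `⤳_o` : emission of the `Ok` verdict on an empty multi-trace. -/
inductive StepOk : Vertex Λ M → Vertex Λ M → Prop where
  | mk (L : Set Λ) (i : Interaction Λ M) :
      StepOk (.node L i MultiTrace.eps) .ok

/-- Rule `⤳_r` : removal of a set `H` of lifelines (with `∅ ⊊ H ⊊ L`)
whose components are all empty. -/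
inductive StepRmv : Vertex Λ M → Vertex Λ M → Prop where
  | mk (L H : Set Λ) (i : Interaction Λ M) (μ : MultiTrace Λ M) :
      H.Nonempty → H ⊂ L → (∀ l ∈ H, μ l = []) →
      StepRmv (.node L i μ) (.node (L \ H) (rmv H i) (MultiTrace.rmv H μ))

/-- Rule `⤳_e` : simultaneous consumption of the action at the head of a
component of the multi-trace and execution of a matching action of the
interaction. -/
inductive StepExec : Vertex Λ M → Vertex Λ M → Prop where
  | mk (L : Set Λ) (i i' : Interaction Λ M) (a : Action Λ M) (p : List Bool)
      (μ : MultiTrace Λ M) :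
      a.lifeline ∈ L → Executes i a p i' →
      StepExec (.node L i (MultiTrace.prepend a μ)) (.node L i' μ)

/-- The transition relation `⤳` of the analysis graph. -/
def Step (v w : Vertex Λ M) : Prop := StepOk v w ∨ StepRmv v w ∨ StepExec v w

/-- One-unambiguity `a ⊑1∈ i` : in the projection of `i` onto `θ(a)`,
there is a unique position at which `a` is immediately executable. -/
def OneUnambiguous (L : Set Λ) (a : Action Λ M) (i : Interaction Λ M) : Prop :=
  ∃! p : List Bool, ∃ i'' : Interaction Λ M, Executes (rmv (L \ {a.lifeline}) i) a p i''

/-- A local trace on lifeline `l` viewed as a multi-trace over `{l}`. -/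
noncomputable def localMT (l : Λ) (w : List (Action Λ M)) : MultiTrace Λ M :=
  fun l' => if l' = l then w else []

/-- Right-nested `seq`-composition of a list of interactions (`∅` for the
empty list). -/
def seqComp : List (Interaction Λ M) → Interaction Λ M
  | [] => .empty
  | [i] => i
  | i :: rest => .seq i (seqComp rest)

/-- The operational trace semantics `σ_op(i)` generated by the two rules
`i↓ ⟹ ε ∈ σ_op(i)` and `i →[a@p] i' ∧ t ∈ σ_op(i') ⟹ a.t ∈ σ_op(i)`. -/
inductive OpTrace : Interaction Λ M → List (Action Λ M) → Prop where
  | empty {i : Interaction Λ M} : Terminates i → OpTrace i []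
  | step {i i' : Interaction Λ M} {a : Action Λ M} {p : List Bool} {t : List (Action Λ M)} :
      Executes i a p i' → OpTrace i' t → OpTrace i (a :: t)

end RV

namespace RV

variable {Λ M : Type}

theorem MultiTrace.isPrefixOf_concat (μ ν : MultiTrace Λ M) : μ.isPrefixOf (μ.concat ν) :=
  fun l => List.prefix_append (μ l) (ν l)

theorem proj_append (u v : List (Action Λ M)) : proj (u ++ v) = (proj u).concat (proj v) := by
  induction u with
  | nil => rfl
  | cons a u ih =>
    funext l
    simp only [List.cons_append, proj, ih, MultiTrace.prepend, MultiTrace.concat]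
    split <;> rfl

theorem proj_isPrefixOf_proj {t' t : List (Action Λ M)} (h : t' <+: t) :
    (proj t').isPrefixOf (proj t) := by
  obtain ⟨s, rfl⟩ := h
  rw [proj_append]
  exact MultiTrace.isPrefixOf_concat _ _

theorem proj_singleton_isPrefixOf_proj_pair {a b : Action Λ M} (hab : a.lifeline ≠ b.lifeline) :
    (proj [b]).isPrefixOf (proj [a, b]) := by
  intro l
  by_cases hb : l = b.lifeline
  · subst hb
    simp [proj, MultiTrace.prepend, MultiTrace.eps, Ne.symm hab]
  · simp [proj, MultiTrace.prepend, MultiTrace.eps, hb]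

/-- The prefixes of the word `a.b` are `ε`, `a` and `a.b`: none contains `b` without `a`. -/
theorem proj_singleton_notMem_proj_image_prefixes {a b : Action Λ M}
    (hab : a.lifeline ≠ b.lifeline) :
    proj [b] ∉ proj '' {t' | t' <+: [a, b]} := by
  rintro ⟨t', ht', heq⟩
  have on_a := congrFun heq a.lifeline
  have on_b := congrFun heq b.lifeline
  simp only [Set.mem_ofPred_eq, List.prefix_cons_iff, List.prefix_nil] at ht'
  rcases ht' with rfl | ⟨_, rfl, rfl | ⟨_, rfl, rfl⟩⟩ <;>
    simp_all [proj, MultiTrace.prepend, MultiTrace.eps]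

/-- the projections of the prefixes of a global trace `t`
are multi-prefixes of the projection of `t` : `π_L(t̄) ⊆ \overline{π_L(t)}`;
moreover the inclusion is strict in general : there exist `L` and `t`
(e.g. `L = {l1,l2}` and `t = l1!m.l2?m`) such that `\overline{π_L(t)}` is
not contained in `π_L(t̄)`. -/
theorem statement9 :
    (∀ (Λ M : Type) (L : Set Λ) (t : List (Action Λ M)),
      (∀ a ∈ t, a.lifeline ∈ L) →
      proj '' {t' | t' <+: t} ⊆ {μ' | MultiTrace.isPrefixOf μ' (proj t)}) ∧
    (∃ (L : Set Bool) (t : List (Action Bool Unit)),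
      (∀ a ∈ t, a.lifeline ∈ L) ∧
      ¬ ({μ' | MultiTrace.isPrefixOf μ' (proj t)} ⊆ proj '' {t' | t' <+: t})) := by
  refine ⟨fun Λ M L t _ => ?_, ?_⟩
  · rintro _ ⟨t', ht', rfl⟩
    exact proj_isPrefixOf_proj ht'
  · let send : Action Bool Unit := ⟨false, true, ()⟩
    let recv : Action Bool Unit := ⟨true, false, ()⟩
    have hsr : send.lifeline ≠ recv.lifeline := Bool.false_ne_true
    refine ⟨Set.univ, [send, recv], fun _ _ => trivial, fun h => ?_⟩
    exact proj_singleton_notMem_proj_image_prefixes hsr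
      (h (proj_singleton_isPrefixOf_proj_pair hsr))

end RV
end

section
/- For any set of lifelines L ⊆ ℒ, any multi-trace μ ∈ 𝕄(L), and any interaction i ∈ 𝕀(L), the set of vertices reachable from (i,μ) in the analysis graph, { v ∈ 𝕍 | (i,μ) ⤳* v }, is finite. -/
open scoped Classical

/-!
Every step of the analysis graph either emits `Ok`, removes a nonempty set of lifelines, or
consumes one action of the multi-trace, so the weight `1 + ∑_{l ∈ L} (|μ_l| + 1)` of a vertex
strictly decreases along `⤳` as long as `L` is finite. Moreover the graph is finitely branching:
there are finitely many `H ⊆ L`, at most one head action per lifeline, and an interaction has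
finitely many `a`-successors. A finitely branching relation with a strictly decreasing
`ℕ`-valued measure has finite reachable sets.
-/

namespace Relation

variable {α : Type*} {r : α → α → Prop}

theorem setOf_reflTransGen_subset (a : α) :
    {c | ReflTransGen r a c} ⊆ insert a (⋃ b ∈ {b | r a b}, {c | ReflTransGen r b c}) := by
  intro c hc
  rcases hc.cases_head with rfl | ⟨b, hab, hbc⟩
  · exact Set.mem_insert _ _
  · exact Set.mem_insert_of_mem _ (Set.mem_biUnion hab hbc)

theorem finite_setOf_reflTransGen_of_measure (P : α → Prop) (f : α → ℕ)
    (hP : ∀ {a b}, r a b → P a → P b) (hf : ∀ {a b}, r a b → P a → f b < f a)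
    (hfin : ∀ a, P a → {b | r a b}.Finite) {a : α} (ha : P a) :
    {c | ReflTransGen r a c}.Finite := by
  induction hn : f a using Nat.strong_induction_on generalizing a with
  | _ n ih =>
    have hsucc : ∀ b ∈ {b | r a b}, {c | ReflTransGen r b c}.Finite := fun b hab =>
      ih (f b) (hn ▸ hf hab ha) (hP hab ha) rfl
    exact (((hfin a ha).biUnion hsucc).insert a).subset (setOf_reflTransGen_subset a)

end Relation

section finsum

variable {ι β : Type*} [AddCommMonoid β] [PartialOrder β] [IsOrderedCancelAddMonoid β]
  {f g : ι → β} {s t : Set ι}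

theorem finsum_mem_lt_finsum_mem (hs : s.Finite) (hle : ∀ x ∈ s, f x ≤ g x)
    (hlt : ∃ x ∈ s, f x < g x) : ∑ᶠ x ∈ s, f x < ∑ᶠ x ∈ s, g x := by
  simp only [finsum_mem_eq_finite_toFinset_sum _ hs]
  exact Finset.sum_lt_sum (by simpa using hle) (by simpa using hlt)

theorem finsum_mem_lt_finsum_mem_of_ssubset (ht : t.Finite) (hst : s ⊂ t)
    (hpos : ∀ x ∈ t, 0 < f x) : ∑ᶠ x ∈ s, f x < ∑ᶠ x ∈ t, f x := by
  obtain ⟨x, hxt, hxs⟩ := Set.exists_of_ssubset hst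
  rw [finsum_mem_eq_finite_toFinset_sum _ ht,
    finsum_mem_eq_finite_toFinset_sum _ (ht.subset hst.subset)]
  exact Finset.sum_lt_sum_of_subset (by simpa using hst.subset) (by simpa using hxt)
    (by simpa using hxs) (hpos x hxt) (fun y hy _ => (hpos y (by simpa using hy)).le)

end finsum

namespace RV

variable {Λ M : Type}

namespace MultiTrace

@[simp]
theorem prepend_apply_lifeline (a : Action Λ M) (μ : MultiTrace Λ M) :
    prepend a μ a.lifeline = a :: μ a.lifeline := by
  simp [prepend]

@[simp]
theorem prepend_apply_of_ne {a : Action Λ M} {l : Λ} (h : l ≠ a.lifeline) (μ : MultiTrace Λ M) :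
    prepend a μ l = μ l := by
  simp [prepend, h]

theorem prepend_injective (a : Action Λ M) : Function.Injective (prepend a) := by
  intro μ ν h
  funext l
  have hl := congrFun h l
  by_cases hla : l = a.lifeline
  · subst hla
    simpa using hl
  · simpa [hla] using hl

theorem finite_setOf_prepend_eq {L : Set Λ} (hL : L.Finite) (μ : MultiTrace Λ M) :
    {q : Action Λ M × MultiTrace Λ M | q.1.lifeline ∈ L ∧ prepend q.1 q.2 = μ}.Finite := by
  refine Set.Finite.of_finite_image (f := fun q => q.1.lifeline) (hL.subset ?_) ?_
  · rintro _ ⟨q, hq, rfl⟩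
    exact hq.1
  · rintro ⟨a, μa⟩ ⟨-, rfl⟩ ⟨b, μb⟩ ⟨-, hb⟩ (hab : a.lifeline = b.lifeline)
    have hhead := congrFun hb b.lifeline
    rw [prepend_apply_lifeline, ← hab, prepend_apply_lifeline, List.cons.injEq] at hhead
    obtain rfl := hhead.1.symm
    exact Prod.ext rfl (prepend_injective a hb).symm

end MultiTrace

theorem finite_setOf_prunes (i : Interaction Λ M) (l : Λ) :
    {i' : Interaction Λ M | Prunes i l i'}.Finite := by
  induction i with
  | empty => exact (Set.finite_singleton .empty).subset (by rintro x hx; cases hx; rfl)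
  | act a => exact (Set.finite_singleton (.act a)).subset (by rintro x hx; cases hx; rfl)
  | loopS i ih =>
      refine ((ih.image Interaction.loopS).insert .empty).subset ?_
      rintro x hx
      cases hx with
      | loopS h => exact Set.mem_insert_of_mem _ ⟨_, h, rfl⟩
      | loopSElim _ => exact Set.mem_insert _ _
  | loopW i ih =>
      refine ((ih.image Interaction.loopW).insert .empty).subset ?_
      rintro x hx
      cases hx with
      | loopW h => exact Set.mem_insert_of_mem _ ⟨_, h, rfl⟩
      | loopWElim _ => exact Set.mem_insert _ _
  | loopP i ih =>
      refine ((ih.image Interaction.loopP).insert .empty).subset ?_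
      rintro x hx
      cases hx with
      | loopP h => exact Set.mem_insert_of_mem _ ⟨_, h, rfl⟩
      | loopPElim _ => exact Set.mem_insert _ _
  | strict i1 i2 ih1 ih2 =>
      refine (Set.Finite.image2 Interaction.strict ih1 ih2).subset ?_
      rintro x hx
      cases hx with
      | strict h1 h2 => exact Set.mem_image2_of_mem h1 h2
  | seq i1 i2 ih1 ih2 =>
      refine (Set.Finite.image2 Interaction.seq ih1 ih2).subset ?_
      rintro x hx
      cases hx with
      | seq h1 h2 => exact Set.mem_image2_of_mem h1 h2
  | par i1 i2 ih1 ih2 =>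
      refine (Set.Finite.image2 Interaction.par ih1 ih2).subset ?_
      rintro x hx
      cases hx with
      | par h1 h2 => exact Set.mem_image2_of_mem h1 h2
  | alt i1 i2 ih1 ih2 =>
      refine (((Set.Finite.image2 Interaction.alt ih1 ih2).union ih1).union ih2).subset ?_
      rintro x hx
      cases hx with
      | altBoth h1 h2 => exact Or.inl (Or.inl (Set.mem_image2_of_mem h1 h2))
      | altL h1 _ => exact Or.inl (Or.inr h1)
      | altR h2 _ => exact Or.inr h2

theorem finite_setOf_executes (i : Interaction Λ M) (a : Action Λ M) :
    {i' : Interaction Λ M | ∃ p, Executes i a p i'}.Finite := by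
  induction i with
  | empty => exact Set.finite_empty.subset (by rintro x ⟨p, hx⟩; cases hx)
  | act b =>
      refine (Set.finite_singleton .empty).subset ?_
      rintro x ⟨p, hx⟩
      cases hx
      rfl
  | loopS i ih =>
      refine (ih.image (fun j => .strict j (.loopS i))).subset ?_
      rintro x ⟨p, hx⟩
      cases hx with
      | loopS h => exact ⟨_, ⟨_, h⟩, rfl⟩
  | loopW i ih =>
      refine (Set.Finite.image2 (fun i'' j => Interaction.seq i'' (.seq j (.loopW i)))
        (finite_setOf_prunes (.loopW i) a.lifeline) ih).subset ?_
      rintro x ⟨p, hx⟩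
      cases hx with
      | loopW h hp => exact Set.mem_image2_of_mem hp ⟨_, h⟩
  | loopP i ih =>
      refine (ih.image (fun j => .par j (.loopP i))).subset ?_
      rintro x ⟨p, hx⟩
      cases hx with
      | loopP h => exact ⟨_, ⟨_, h⟩, rfl⟩
  | strict i1 i2 ih1 ih2 =>
      refine ((ih1.image (fun j => .strict j i2)).union ih2).subset ?_
      rintro x ⟨p, hx⟩
      cases hx with
      | strictL _ h => exact Or.inl ⟨_, ⟨_, h⟩, rfl⟩
      | strictR _ h => exact Or.inr ⟨_, h⟩
  | seq i1 i2 ih1 ih2 =>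
      refine ((ih1.image (fun j => .seq j i2)).union
        (Set.Finite.image2 Interaction.seq (finite_setOf_prunes i1 a.lifeline) ih2)).subset ?_
      rintro x ⟨p, hx⟩
      cases hx with
      | seqL _ h => exact Or.inl ⟨_, ⟨_, h⟩, rfl⟩
      | seqR hp h => exact Or.inr (Set.mem_image2_of_mem hp ⟨_, h⟩)
  | par i1 i2 ih1 ih2 =>
      refine ((ih1.image (fun j => .par j i2)).union (ih2.image (fun j => .par i1 j))).subset ?_
      rintro x ⟨p, hx⟩
      cases hx with
      | parL _ h => exact Or.inl ⟨_, ⟨_, h⟩, rfl⟩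
      | parR _ h => exact Or.inr ⟨_, ⟨_, h⟩, rfl⟩
  | alt i1 i2 ih1 ih2 =>
      refine (ih1.union ih2).subset ?_
      rintro x ⟨p, hx⟩
      cases hx with
      | altL _ h => exact Or.inl ⟨_, h⟩
      | altR _ h => exact Or.inr ⟨_, h⟩

namespace Vertex

def FiniteLifelines : Vertex Λ M → Prop
  | .ok => True
  | .node L _ _ => L.Finite

noncomputable def weight : Vertex Λ M → ℕ
  | .ok => 0
  | .node L _ μ => (∑ᶠ l ∈ L, ((μ l).length + 1)) + 1

end Vertex

theorem Step.finiteLifelines {v w : Vertex Λ M} (h : Step v w) (hv : v.FiniteLifelines) :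
    w.FiniteLifelines := by
  rcases h with h | h | h <;> cases h
  · trivial
  · exact Set.Finite.sdiff hv
  · exact hv

theorem Step.weight_lt {v w : Vertex Λ M} (h : Step v w) (hv : v.FiniteLifelines) :
    w.weight < v.weight := by
  rcases h with h | h | h
  · cases h
    exact Nat.succ_pos _
  · obtain ⟨L, H, i, μ, hH, hHL, -⟩ := h
    have hsame : ∀ l ∈ L \ H, (MultiTrace.rmv H μ l).length + 1 = (μ l).length + 1 := by
      rintro l ⟨-, hlH⟩
      simp [MultiTrace.rmv, hlH]
    have hssub : L \ H ⊂ L :=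
      Set.sdiff_ssubset_left_iff.mpr (by rwa [Set.inter_eq_right.mpr hHL.subset])
    simp only [Vertex.weight, finsum_mem_congr rfl hsame, add_lt_add_iff_right]
    exact finsum_mem_lt_finsum_mem_of_ssubset hv hssub fun _ _ => Nat.succ_pos _
  · obtain ⟨L, i, i', a, p, μ, ha, -⟩ := h
    simp only [Vertex.weight, add_lt_add_iff_right]
    refine finsum_mem_lt_finsum_mem hv (fun l _ => ?_) ⟨a.lifeline, ha, by simp⟩
    by_cases hl : l = a.lifeline
    · subst hl
      simp
    · simp [hl]

theorem finite_setOf_step {v : Vertex Λ M} (hv : v.FiniteLifelines) :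
    {w | Step v w}.Finite := by
  obtain _ | ⟨L, i, μ⟩ := v
  · exact Set.finite_empty.subset fun w h => by rcases h with h | h | h <;> cases h
  have hremove : ((fun H => Vertex.node (L \ H) (rmv H i) (MultiTrace.rmv H μ)) ''
      {H | H ⊆ L}).Finite := hv.finite_subsets.image _
  have hexecute : (⋃ q ∈ {q : Action Λ M × MultiTrace Λ M |
      q.1.lifeline ∈ L ∧ MultiTrace.prepend q.1 q.2 = μ},
      (fun i' => Vertex.node L i' q.2) '' {i' | ∃ p, Executes i q.1 p i'}).Finite :=
    (MultiTrace.finite_setOf_prepend_eq hv μ).biUnion fun q _ =>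
      (finite_setOf_executes i q.1).image _
  refine ((hremove.union hexecute).insert .ok).subset ?_
  rintro w (h | h | h)
  · cases h
    exact Set.mem_insert _ _
  · obtain ⟨L, H, i, μ, -, hHL, -⟩ := h
    exact Or.inr (Or.inl ⟨H, hHL.subset, rfl⟩)
  · obtain ⟨L, i, i', a, p, μ, ha, hex⟩ := h
    exact Or.inr (Or.inr (Set.mem_biUnion (x := (a, μ)) ⟨ha, rfl⟩ ⟨i', ⟨p, hex⟩, rfl⟩))

theorem statement14_general {Λ M : Type} (L : Set Λ) (hLfin : L.Finite)
    (i : Interaction Λ M) (μ : MultiTrace Λ M) :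
    {v : Vertex Λ M | Relation.ReflTransGen Step (Vertex.node L i μ) v}.Finite :=
  Relation.finite_setOf_reflTransGen_of_measure Vertex.FiniteLifelines Vertex.weight
    Step.finiteLifelines Step.weight_lt (fun _ => finite_setOf_step) (a := Vertex.node L i μ) hLfin

/-- the set of vertices reachable from `(i,μ)` in the
analysis graph is finite. -/
theorem statement14 {Λ M : Type} (L : Set Λ) (hLfin : L.Finite)
    (i : Interaction Λ M) (μ : MultiTrace Λ M)
    (hi : i.lifelinesIn L) (hμ : MultiTrace.over' L μ) :
    {v : Vertex Λ M | Relation.ReflTransGen Step (Vertex.node L i μ) v}.Finite :=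
  statement14_general L hLfin i μ

end RV
end

section
/- If an action a is one-unambiguous in an interaction i ∈ 𝕀(L) and a is executable in i (i.e., there exists i' ∈ 𝕀(L) with i →[a] i'), then the follow-up is unique: there is exactly one interaction i' ∈ 𝕀(L) such that i →[a] i'. -/
open scoped Classical

namespace RV

variable {Λ M : Type}

namespace MultiTrace

/-- `μ ∈ 𝕄(L)` : components vanish outside `L` and every action of the
component on `l` occurs on `l`. -/
def overL (L : Set Λ) (μ : MultiTrace Λ M) : Prop :=
  (∀ l ∉ L, μ l = []) ∧ ∀ l, ∀ a ∈ μ l, a.lifeline = l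

end MultiTrace

end RV

/-!
Removing lifelines other than `θ(a)` commutes with executing `a` at a given position, so every
execution of `a` in `i` is mirrored, at the same position, in the projection onto `θ(a)`.
One-unambiguity therefore pins down the position, and at a fixed position execution is
deterministic because pruning is: where `altL`, `altR` and `altBoth` (or a loop and its
elimination) overlap, one side would both prune and collide.
-/

namespace RV

variable {Λ M : Type} {H : Set Λ} {l : Λ}

theorem Terminates.rmv {i : Interaction Λ M} (h : Terminates i) : Terminates (rmv H i) := by
  induction h with
  | empty => exact .empty
  | altL _ ih => exact .altL ih
  | altR _ ih => exact .altR ih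
  | strict _ _ ih1 ih2 => exact .strict ih1 ih2
  | seq _ _ ih1 ih2 => exact .seq ih1 ih2
  | par _ _ ih1 ih2 => exact .par ih1 ih2
  | loopS _ => exact .loopS _
  | loopW _ => exact .loopW _
  | loopP _ => exact .loopP _

theorem Collides.rmv {i : Interaction Λ M} (hl : l ∉ H) (h : Collides i l) :
    Collides (rmv H i) l := by
  induction h with
  | @act a _ ha =>
      rw [RV.rmv, if_neg (ha ▸ hl)]
      exact .act ha
  | alt _ _ ih1 ih2 => exact .alt (ih1 hl) (ih2 hl)
  | strictL _ ih => exact .strictL (ih hl)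
  | strictR _ ih => exact .strictR (ih hl)
  | seqL _ ih => exact .seqL (ih hl)
  | seqR _ ih => exact .seqR (ih hl)
  | parL _ ih => exact .parL (ih hl)
  | parR _ ih => exact .parR (ih hl)

theorem Prunes.rmv {i i' : Interaction Λ M} (hl : l ∉ H) (h : Prunes i l i') :
    Prunes (rmv H i) l (rmv H i') := by
  induction h with
  | empty => exact .empty _
  | @act a _ ha =>
      by_cases hH : a.lifeline ∈ H
      · rw [RV.rmv, if_pos hH]; exact .empty _
      · rw [RV.rmv, if_neg hH]; exact .act ha
  | strict _ _ ih1 ih2 => exact .strict (ih1 hl) (ih2 hl)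
  | seq _ _ ih1 ih2 => exact .seq (ih1 hl) (ih2 hl)
  | par _ _ ih1 ih2 => exact .par (ih1 hl) (ih2 hl)
  | altBoth _ _ ih1 ih2 => exact .altBoth (ih1 hl) (ih2 hl)
  | altL _ hc ih => exact .altL (ih hl) (hc.rmv hl)
  | altR _ hc ih => exact .altR (ih hl) (hc.rmv hl)
  | loopS _ ih => exact .loopS (ih hl)
  | loopW _ ih => exact .loopW (ih hl)
  | loopP _ ih => exact .loopP (ih hl)
  | loopSElim hc => exact .loopSElim (hc.rmv hl)
  | loopWElim hc => exact .loopWElim (hc.rmv hl)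
  | loopPElim hc => exact .loopPElim (hc.rmv hl)

theorem Executes.rmv {i i' : Interaction Λ M} {a : Action Λ M} {p : List Bool}
    (hl : a.lifeline ∉ H) (h : Executes i a p i') : Executes (rmv H i) a p (rmv H i') := by
  induction h with
  | act a => simp only [RV.rmv, if_neg hl]; exact .act a
  | altL _ _ ih => exact .altL _ (ih hl)
  | altR _ _ ih => exact .altR _ (ih hl)
  | parL _ _ ih => exact .parL _ (ih hl)
  | parR _ _ ih => exact .parR _ (ih hl)
  | strictL _ _ ih => exact .strictL _ (ih hl)
  | strictR ht _ ih => exact .strictR ht.rmv (ih hl)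
  | seqL _ _ ih => exact .seqL _ (ih hl)
  | seqR hp _ ih => exact .seqR (hp.rmv hl) (ih hl)
  | loopS _ ih => exact .loopS (ih hl)
  | loopW _ hp ih => exact .loopW (ih hl) (hp.rmv hl)
  | loopP _ ih => exact .loopP (ih hl)

theorem Prunes.not_collides {i i' : Interaction Λ M} (h : Prunes i l i') : ¬ Collides i l := by
  induction h <;> rintro ⟨⟩ <;> simp_all

theorem Prunes.unique {i j₁ j₂ : Interaction Λ M} (h₁ : Prunes i l j₁) (h₂ : Prunes i l j₂) :
    j₁ = j₂ := by
  induction h₁ generalizing j₂ with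
  | empty | act _ => cases h₂; rfl
  | strict _ _ ih1 ih2 | seq _ _ ih1 ih2 | par _ _ ih1 ih2 =>
      cases h₂
      rw [ih1 ‹_›, ih2 ‹_›]
  | altBoth hp₁ hp₂ ih1 ih2 =>
      cases h₂ with
      | altBoth h₁' h₂' => rw [ih1 h₁', ih2 h₂']
      | altL _ hc => exact absurd hc hp₂.not_collides
      | altR _ hc => exact absurd hc hp₁.not_collides
  | altL hp hc ih =>
      cases h₂ with
      | altBoth _ h₂' => exact absurd hc h₂'.not_collides
      | altL h₁' _ => exact ih h₁'
      | altR _ hc' => exact absurd hc' hp.not_collides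
  | altR hp hc ih =>
      cases h₂ with
      | altBoth h₁' _ => exact absurd hc h₁'.not_collides
      | altL _ hc' => exact absurd hc' hp.not_collides
      | altR h₂' _ => exact ih h₂'
  | loopS hp ih | loopW hp ih | loopP hp ih =>
      cases h₂
      · rw [ih ‹_›]
      · exact absurd ‹_› hp.not_collides
  | loopSElim hc | loopWElim hc | loopPElim hc =>
      cases h₂
      · exact absurd hc (‹Prunes _ _ _›).not_collides
      · rfl

theorem Executes.unique {i j₁ j₂ : Interaction Λ M} {a : Action Λ M} {p : List Bool}
    (h₁ : Executes i a p j₁) (h₂ : Executes i a p j₂) : j₁ = j₂ := by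
  induction h₁ generalizing j₂ with
  | act _ => cases h₂; rfl
  | altL _ _ ih | altR _ _ ih | strictR _ _ ih =>
      cases h₂
      exact ih ‹_›
  | parL _ _ ih | parR _ _ ih | strictL _ _ ih | seqL _ _ ih | loopS _ ih | loopP _ ih =>
      cases h₂
      rw [ih ‹_›]
  | seqR hp _ ih =>
      cases h₂ with
      | seqR hp' h' => rw [hp.unique hp', ih h']
  | loopW _ hp ih =>
      cases h₂ with
      | loopW h' hp' => rw [hp.unique hp', ih h']

theorem OneUnambiguous.position_eq {L : Set Λ} {a : Action Λ M} {i j₁ j₂ : Interaction Λ M}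
    {p q : List Bool} (h : OneUnambiguous L a i) (hp : Executes i a p j₁)
    (hq : Executes i a q j₂) : p = q := by
  have hl : a.lifeline ∉ L \ {a.lifeline} := fun hl => hl.2 rfl
  exact ExistsUnique.unique h ⟨_, hp.rmv hl⟩ ⟨_, hq.rmv hl⟩

theorem statement15_general {Λ M : Type} (L : Set Λ) (a : Action Λ M)
    (i : Interaction Λ M)
    (h1 : OneUnambiguous L a i)
    (h2 : ∃ i' : Interaction Λ M, ∃ p : List Bool, Executes i a p i') :
    ∃! i' : Interaction Λ M, ∃ p : List Bool, Executes i a p i' := by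
  obtain ⟨i', p, hex⟩ := h2
  refine ⟨i', ⟨p, hex⟩, fun j ⟨q, hq⟩ => ?_⟩
  rw [h1.position_eq hq hex] at hq
  exact hq.unique hex

/-- if `a` is one-unambiguous in `i ∈ 𝕀(L)` and `a` is
executable in `i`, then the follow-up interaction is unique. -/
theorem statement15 {Λ M : Type} (L : Set Λ) (a : Action Λ M)
    (i : Interaction Λ M) (hi : i.lifelinesIn L) (ha : a.lifeline ∈ L)
    (h1 : OneUnambiguous L a i)
    (h2 : ∃ i' : Interaction Λ M, ∃ p : List Bool, Executes i a p i') :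
    ∃! i' : Interaction Λ M, ∃ p : List Bool, Executes i a p i' :=
  statement15_general L a i h1 h2

end RV
end
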